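/- Under the bijection of the previous statement, the exact log-likelihood of the dimension-decreasing flowified linear layer decomposes as log p(x) = log p_inv(y_{m+1:n} | Σ_m y_{1:m}) + ∑_{i=1}^m log σ_i + log p(z), where z = Wx + b, y = Ux, p(z) is any density on ℝ^m and p_inv(·|·) is a conditional density on ℝ^{n−m}. In particular, if p and p_inv(·|c) are probability densities for every c, then p(x) so defined is a probability density on ℝ^n. -/

import Mathlib

/-!
Put `y = U x` and split it as `(y₁, y₂) ∈ ℝ^m × ℝ^(n-m)`. Since `S y = σ ⊙ y₁`, the density is
`p_inv(y₂ | σ ⊙ y₁) · ∏ σ · p_z(V diag(σ) y₁ + b)`, a function of `(y₁, y₂)` alone. As `det U = 1`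
and splitting the coordinates preserves Lebesgue measure, it suffices to integrate this function
over `ℝ^m × ℝ^(n-m)`. Integrating out `y₂` first removes `p_inv`, and the affine change of
variables `z = V diag(σ) y₁ + b`, whose Jacobian `∏ σ` is exactly the remaining factor, leaves
`∫ p_z = 1`.
-/

open Matrix MeasureTheory

open scoped ENNReal

namespace Matrix

variable {ι : Type*} [Fintype ι] [DecidableEq ι]

theorem lintegral_comp_mulVec (M : Matrix ι ι ℝ) (hM : M.det ≠ 0) {f : (ι → ℝ) → ℝ≥0∞}
    (hf : Measurable f) :
    ∫⁻ x, f (M *ᵥ x) = ENNReal.ofReal |M.det|⁻¹ * ∫⁻ x, f x := by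
  calc ∫⁻ x, f (M *ᵥ x) = ∫⁻ x, f x ∂(volume.map (toLin' M)) :=
        (lintegral_map hf (toLin' M).continuous_of_finiteDimensional.measurable).symm
    _ = ENNReal.ofReal |M.det|⁻¹ * ∫⁻ x, f x := by
        rw [Real.map_matrix_volume_pi_eq_smul_volume_pi hM, lintegral_smul_measure, abs_inv,
          smul_eq_mul]

theorem measurePreserving_mulVec (M : Matrix ι ι ℝ) (hM : |M.det| = 1) :
    MeasurePreserving (M *ᵥ ·) := by
  refine ⟨(toLin' M).continuous_of_finiteDimensional.measurable, ?_⟩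
  rw [show (M *ᵥ ·) = toLin' M from rfl, Real.map_matrix_volume_pi_eq_smul_volume_pi
    (abs_ne_zero.1 (hM ▸ one_ne_zero)), abs_inv, hM]
  simp

theorem lintegral_abs_det_mul_comp_affine (M : Matrix ι ι ℝ) (hM : M.det ≠ 0) (b : ι → ℝ)
    {g : (ι → ℝ) → ℝ≥0∞} (hg : Measurable g) :
    ∫⁻ y, ENNReal.ofReal |M.det| * g (M *ᵥ y + b) = ∫⁻ z, g z := by
  have hgb : Measurable fun z => g (z + b) := hg.comp (measurable_add_const b)
  have hgM : Measurable fun y => g (M *ᵥ y + b) := by fun_prop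
  rw [lintegral_const_mul _ hgM, lintegral_comp_mulVec M hM hgb, lintegral_add_right_eq_self,
    ← mul_assoc, ← ENNReal.ofReal_mul (abs_nonneg _), mul_inv_cancel₀ (abs_ne_zero.2 hM),
    ENNReal.ofReal_one, one_mul]

end Matrix

def piSplitAt {α : Type*} {m n : ℕ} (hmn : m ≤ n) (y : Fin n → α) :
    (Fin m → α) × (Fin (n - m) → α) :=
  (fun i => y (Fin.castLE hmn i), fun j => y ⟨m + j, by omega⟩)

theorem measurePreserving_piSplitAt {α : Type*} [MeasureSpace α]
    [SigmaFinite (volume : Measure α)] {m n : ℕ} (hmn : m ≤ n) :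
    MeasurePreserving (piSplitAt (α := α) hmn) := by
  let e : Fin m ⊕ Fin (n - m) ≃ Fin n := finSumFinEquiv.trans (finCongr (by omega))
  exact (volume_measurePreserving_sumPiEquivProdPi _).comp
    ((volume_measurePreserving_piCongrLeft (fun _ => α) e).symm _)

theorem mulVec_eq_mul_piSplitAt_fst {m n : ℕ} (hmn : m ≤ n) {σ : Fin m → ℝ}
    {S : Matrix (Fin m) (Fin n) ℝ} (hS : ∀ i j, S i j = if (i : ℕ) = (j : ℕ) then σ i else 0)
    (y : Fin n → ℝ) : S *ᵥ y = fun i => σ i * (piSplitAt hmn y).1 i := by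
  ext i
  have hcast (j : Fin n) : ((i : ℕ) = j) = (Fin.castLE hmn i = j) := by simp [Fin.ext_iff]
  simp [mulVec, dotProduct, hS, hcast, piSplitAt]

theorem lintegral_prod_mul_eq_of_lintegral_eq_one {α β : Type*} [MeasurableSpace α]
    [MeasurableSpace β] {μ : Measure α} {ν : Measure β} [SFinite ν] {k : α → β → ℝ≥0∞}
    (hk : Measurable (Function.uncurry k)) (hk_one : ∀ a, ∫⁻ b, k a b ∂ν = 1)
    {f : α → ℝ≥0∞} (hf : Measurable f) :
    ∫⁻ q, k q.1 q.2 * f q.1 ∂μ.prod ν = ∫⁻ a, f a ∂μ := by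
  have hkf : Measurable fun q : α × β => k q.1 q.2 * f q.1 := hk.mul (hf.comp measurable_fst)
  rw [lintegral_prod _ hkf.aemeasurable]
  congr with a
  have hka : Measurable (k a) := hk.comp measurable_prodMk_left
  dsimp only
  rw [lintegral_mul_const _ hka, hk_one, one_mul]

theorem lintegral_ofReal_eq_one_of_integral_eq_one {α : Type*} [MeasurableSpace α]
    {μ : Measure α} {g : α → ℝ} (hg : ∀ x, 0 ≤ g x) (hg_one : ∫ x, g x ∂μ = 1) :
    ∫⁻ x, ENNReal.ofReal (g x) ∂μ = 1 := by
  rw [← ofReal_integral_eq_lintegral_ofReal (Integrable.of_integral_ne_zero (by simp [hg_one]))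
    (.of_forall hg), hg_one, ENNReal.ofReal_one]

theorem integral_eq_one_of_lintegral_ofReal_eq_one {α : Type*} [MeasurableSpace α]
    {μ : Measure α} {g : α → ℝ} (hg : ∀ x, 0 ≤ g x) (hgm : AEStronglyMeasurable g μ)
    (hg_one : ∫⁻ x, ENNReal.ofReal (g x) ∂μ = 1) :
    ∫ x, g x ∂μ = 1 := by
  rw [integral_eq_lintegral_of_nonneg_ae (.of_forall hg) hgm, hg_one, ENNReal.toReal_one]

/-- The funnel density in the coordinates `(y₁, y₂)` of `y = U x`: the conditioning variable
`Σ_m y_{1:m}` is `σ ⊙ y₁`, and `z = V (σ ⊙ y₁) + b`. -/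
def funnelDensity {m : ℕ} {β : Type*} (σ : Fin m → ℝ) (V : Matrix (Fin m) (Fin m) ℝ)
    (b : Fin m → ℝ) (p_z : (Fin m → ℝ) → ℝ) (p_inv : β → (Fin m → ℝ) → ℝ)
    (y : (Fin m → ℝ) × β) : ℝ :=
  p_inv y.2 (fun i => σ i * y.1 i) * (∏ i, σ i) * p_z (V *ᵥ (fun i => σ i * y.1 i) + b)

section funnelDensity

variable {m : ℕ} {β : Type*} {σ : Fin m → ℝ} {V : Matrix (Fin m) (Fin m) ℝ} {b : Fin m → ℝ}
  {p_z : (Fin m → ℝ) → ℝ} {p_inv : β → (Fin m → ℝ) → ℝ}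

theorem funnelDensity_nonneg (hσ : ∀ i, 0 ≤ σ i) (hpz : ∀ z, 0 ≤ p_z z)
    (hpinv : ∀ y₂ c, 0 ≤ p_inv y₂ c) (y : (Fin m → ℝ) × β) :
    0 ≤ funnelDensity σ V b p_z p_inv y :=
  mul_nonneg (mul_nonneg (hpinv _ _) (Finset.prod_nonneg fun i _ => hσ i)) (hpz _)

variable [MeasurableSpace β]

theorem measurable_funnelDensity (hpzmeas : Measurable p_z)
    (hpinvmeas : Measurable (Function.uncurry p_inv)) :
    Measurable (funnelDensity σ V b p_z p_inv) := by
  have hscale : Measurable fun y : (Fin m → ℝ) × β => fun i => σ i * y.1 i := by fun_prop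
  exact (hpinvmeas.comp (measurable_snd.prodMk hscale)).mul_const _ |>.mul
    (hpzmeas.comp (by fun_prop))

theorem lintegral_ofReal_funnelDensity {ν : Measure β} [SFinite ν] (hσ : ∀ i, 0 < σ i)
    (hV : |V.det| = 1) (hpz : ∀ z, 0 ≤ p_z z) (hpzmeas : Measurable p_z)
    (hpzint : ∫ z, p_z z = 1) (hpinv : ∀ y₂ c, 0 ≤ p_inv y₂ c)
    (hpinvmeas : Measurable (Function.uncurry p_inv)) (hpinvint : ∀ c, ∫ y₂, p_inv y₂ c ∂ν = 1) :
    ∫⁻ y, ENNReal.ofReal (funnelDensity σ V b p_z p_inv y) ∂(volume.prod ν) = 1 := by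
  have hprod : 0 < ∏ i, σ i := Finset.prod_pos fun i _ => hσ i
  have hdet : |(V * diagonal σ).det| = ∏ i, σ i := by
    rw [det_mul, abs_mul, hV, det_diagonal, one_mul, abs_of_pos hprod]
  have hVσ (y₁ : Fin m → ℝ) : V *ᵥ (fun i => σ i * y₁ i) = (V * diagonal σ) *ᵥ y₁ := by
    rw [← mulVec_mulVec]
    congr with i
    exact (mulVec_diagonal σ y₁ i).symm
  have hk_meas : Measurable fun y : (Fin m → ℝ) × β =>
      ENNReal.ofReal (p_inv y.2 (fun i => σ i * y.1 i)) :=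
    (hpinvmeas.comp (measurable_snd.prodMk (by fun_prop))).ennreal_ofReal
  have hk_one (y₁ : Fin m → ℝ) : ∫⁻ y₂, ENNReal.ofReal (p_inv y₂ (fun i => σ i * y₁ i)) ∂ν = 1 :=
    lintegral_ofReal_eq_one_of_integral_eq_one (hpinv · _) (hpinvint _)
  have hf_meas : Measurable fun y₁ =>
      ENNReal.ofReal |(V * diagonal σ).det| * ENNReal.ofReal (p_z ((V * diagonal σ) *ᵥ y₁ + b)) :=
    measurable_const.mul (hpzmeas.comp (by fun_prop)).ennreal_ofReal
  calc ∫⁻ y, ENNReal.ofReal (funnelDensity σ V b p_z p_inv y) ∂(volume.prod ν)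
      = ∫⁻ y : (Fin m → ℝ) × β, ENNReal.ofReal (p_inv y.2 (fun i => σ i * y.1 i)) *
          (ENNReal.ofReal |(V * diagonal σ).det| *
            ENNReal.ofReal (p_z ((V * diagonal σ) *ᵥ y.1 + b))) ∂(volume.prod ν) := by
        congr with y
        rw [funnelDensity, hVσ, hdet, ENNReal.ofReal_mul (mul_nonneg (hpinv _ _) hprod.le),
          ENNReal.ofReal_mul (hpinv _ _), mul_assoc]
    _ = ∫⁻ y₁, ENNReal.ofReal |(V * diagonal σ).det| *
          ENNReal.ofReal (p_z ((V * diagonal σ) *ᵥ y₁ + b)) :=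
        lintegral_prod_mul_eq_of_lintegral_eq_one
          (k := fun y₁ y₂ => ENNReal.ofReal (p_inv y₂ fun i => σ i * y₁ i)) hk_meas hk_one hf_meas
    _ = ∫⁻ z, ENNReal.ofReal (p_z z) :=
        lintegral_abs_det_mul_comp_affine _ (abs_ne_zero.1 (hdet ▸ hprod.ne')) b
          hpzmeas.ennreal_ofReal
    _ = 1 := lintegral_ofReal_eq_one_of_integral_eq_one hpz hpzint

end funnelDensity

/-- Funnel factorization of the dimension-decreasing flowified linear layer: the density
`p(x) = p_inv(y_{m+1:n} | Σ_m y_{1:m}) · (∏ᵢ σᵢ) · p_z(Wx + b)` (equivalently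
`log p(x) = log p_inv + ∑ᵢ log σᵢ + log p_z(z)`, with `z = Wx+b`, `y = Ux`),
defined from a base density `p_z` and a conditional density `p_inv`, is a probability
density on `ℝ^n`. -/
theorem funnel_density_is_probability_density
    {m n : ℕ} (hmn : m ≤ n)
    (U : Matrix (Fin n) (Fin n) ℝ) (V : Matrix (Fin m) (Fin m) ℝ)
    (hUdet : U.det = 1)
    (hVdet : V.det = 1)
    (σ : Fin m → ℝ) (hσ : ∀ i, 0 < σ i)
    (S : Matrix (Fin m) (Fin n) ℝ)
    (hS : ∀ i j, S i j = if (i : ℕ) = (j : ℕ) then σ i else 0)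
    (b : Fin m → ℝ)
    (p_z : (Fin m → ℝ) → ℝ)
    (hpz : ∀ z, 0 ≤ p_z z) (hpzmeas : Measurable p_z)
    (hpzint : ∫ z, p_z z = 1)
    (p_inv : (Fin (n - m) → ℝ) → (Fin m → ℝ) → ℝ)
    (hpinv : ∀ y₂ c, 0 ≤ p_inv y₂ c)
    (hpinvmeas : Measurable (Function.uncurry p_inv))
    (hpinvint : ∀ c, ∫ y₂, p_inv y₂ c = 1) :
    (∀ x : Fin n → ℝ,
      0 ≤ p_inv (fun j => U.mulVec x ⟨m + (j : ℕ), by have := j.isLt; omega⟩)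
            (fun i : Fin m => σ i *
              U.mulVec x ⟨(i : ℕ), lt_of_lt_of_le i.isLt hmn⟩) *
          (∏ i, σ i) * p_z ((V * S * U).mulVec x + b)) ∧
    ∫ x : Fin n → ℝ,
      p_inv (fun j => U.mulVec x ⟨m + (j : ℕ), by have := j.isLt; omega⟩)
          (fun i : Fin m => σ i *
            U.mulVec x ⟨(i : ℕ), lt_of_lt_of_le i.isLt hmn⟩) *
        (∏ i, σ i) * p_z ((V * S * U).mulVec x + b) = 1 := by
  have hz (x : Fin n → ℝ) :
      (V * S * U) *ᵥ x = V *ᵥ fun i => σ i * (piSplitAt hmn (U *ᵥ x)).1 i := by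
    rw [← mulVec_mulVec, ← mulVec_mulVec, mulVec_eq_mul_piSplitAt_fst hmn hS]
  simp only [hz]
  change (∀ x, 0 ≤ funnelDensity σ V b p_z p_inv (piSplitAt hmn (U *ᵥ x))) ∧
    ∫ x, funnelDensity σ V b p_z p_inv (piSplitAt hmn (U *ᵥ x)) = 1
  have hΦ : MeasurePreserving fun x => piSplitAt hmn (U *ᵥ x) :=
    (measurePreserving_piSplitAt hmn).comp (U.measurePreserving_mulVec (by simp [hUdet]))
  have hmeas := measurable_funnelDensity (σ := σ) (V := V) (b := b) hpzmeas hpinvmeas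
  have hnonneg := funnelDensity_nonneg (V := V) (b := b) (fun i => (hσ i).le) hpz hpinv
  refine ⟨fun x => hnonneg _, integral_eq_one_of_lintegral_ofReal_eq_one (fun x => hnonneg _)
    (hmeas.comp hΦ.measurable).aestronglyMeasurable ?_⟩
  rw [hΦ.lintegral_comp hmeas.ennreal_ofReal, Measure.volume_eq_prod]
  exact lintegral_ofReal_funnelDensity hσ (by simp [hVdet]) hpz hpzmeas hpzint hpinv hpinvmeas
    hpinvint
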